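/- arXiv:0811.3655 — 5 statements merged into one kernel-verified Lean document; each statement's English description precedes it below -/
import Mathlib

section
/- With the same setup of square-free quadrics F_{abc} = λ_{abc} x_a x_b + μ_{abc} x_a x_c + ν_{abc} x_b x_c satisfying the Koszul relations (-1)^a x_a F_{bcd} + (-1)^{b-1} x_b F_{acd} + (-1)^{c-2} x_c F_{abd} + (-1)^{d-3} x_d F_{abc} = 0 for all 0 ≤ a < b < c < d ≤ n, one has for every 0 ≤ d < e < f < g ≤ n the relation (-1)^{e-1} ν_{dfg} + (-1)^{f-2} ν_{deg} + (-1)^{g-3} ν_{def} = 0. -/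
open MvPolynomial

attribute [local instance] MvPolynomial.gradedAlgebra

lemma eval_update_zero_quadric {σ R : Type*} [CommSemiring R] [DecidableEq σ] {a b c : σ}
    (hb : b ≠ a) (hc : c ≠ a) (l m v : R) :
    eval (Function.update 1 a 0) (C l * X a * X b + C m * X a * X c + C v * X b * X c) = v := by
  simp [Function.update_of_ne hb, Function.update_of_ne hc]

/- Evaluate the Koszul relation for `d < e < f < g` at `x_d = 0` and `x_i = 1` otherwise:
this keeps exactly the monomial `x_e x_f x_g`, whose coefficient is the claimed sum. -/
theorem stmt_1_general {k : Type*} [Field k] (n : ℕ)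
    (lam mu nu : Fin (n + 1) → Fin (n + 1) → Fin (n + 1) → k)
    (F : Fin (n + 1) → Fin (n + 1) → Fin (n + 1) → MvPolynomial (Fin (n + 1)) k)
    (hF : ∀ a b c : Fin (n + 1), a < b → b < c →
      F a b c = C (lam a b c) * X a * X b + C (mu a b c) * X a * X c
        + C (nu a b c) * X b * X c)
    (hK : ∀ a b c d : Fin (n + 1), a < b → b < c → c < d →
      C ((-1 : k) ^ (a : ℕ)) * X a * F b c d - C ((-1 : k) ^ (b : ℕ)) * X b * F a c d
        + C ((-1 : k) ^ (c : ℕ)) * X c * F a b d - C ((-1 : k) ^ (d : ℕ)) * X d * F a b c = 0) :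
    ∀ d e f g : Fin (n + 1), d < e → e < f → f < g →
      -((-1 : k) ^ (e : ℕ) * nu d f g) + (-1 : k) ^ (f : ℕ) * nu d e g
        - (-1 : k) ^ (g : ℕ) * nu d e f = 0 := by
  intro d e f g hde hef hfg
  have eval_F : ∀ b c, d < b → b < c → eval (Function.update 1 d 0) (F d b c) = nu d b c :=
    fun b c hdb hbc => by
      rw [hF d b c hdb hbc, eval_update_zero_quadric hdb.ne' (hdb.trans hbc).ne']
  have h := congrArg (eval (Function.update 1 d 0)) (hK d e f g hde hef hfg)
  simp only [map_add, map_sub, map_mul, eval_C, eval_X, Function.update_self, mul_zero,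
    zero_mul, map_zero, eval_F f g (hde.trans hef) hfg, eval_F e g hde (hef.trans hfg),
    eval_F e f hde hef, Function.update_of_ne hde.ne', Function.update_of_ne (hde.trans hef).ne',
    Function.update_of_ne (hde.trans (hef.trans hfg)).ne', Pi.one_apply] at h
  linear_combination h

/-- Comparing coefficients in the Koszul relations yields, for every `d < e < f < g`,
the relation `(-1)^{e-1} ν_{dfg} + (-1)^{f-2} ν_{deg} + (-1)^{g-3} ν_{def} = 0`. -/
theorem stmt_1 {k : Type*} [Field k] (n : ℕ)
    (I : Ideal (MvPolynomial (Fin (n + 1)) k))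
    (hI : Ideal.IsHomogeneous (homogeneousSubmodule (Fin (n + 1)) k) I)
    (lam mu nu : Fin (n + 1) → Fin (n + 1) → Fin (n + 1) → k)
    (F : Fin (n + 1) → Fin (n + 1) → Fin (n + 1) → MvPolynomial (Fin (n + 1)) k)
    (hF : ∀ a b c : Fin (n + 1), a < b → b < c →
      F a b c = C (lam a b c) * X a * X b + C (mu a b c) * X a * X c
        + C (nu a b c) * X b * X c)
    (hFI : ∀ a b c : Fin (n + 1), a < b → b < c → F a b c ∈ I)
    (hK : ∀ a b c d : Fin (n + 1), a < b → b < c → c < d →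
      C ((-1 : k) ^ (a : ℕ)) * X a * F b c d - C ((-1 : k) ^ (b : ℕ)) * X b * F a c d
        + C ((-1 : k) ^ (c : ℕ)) * X c * F a b d - C ((-1 : k) ^ (d : ℕ)) * X d * F a b c = 0) :
    ∀ d e f g : Fin (n + 1), d < e → e < f → f < g →
      -((-1 : k) ^ (e : ℕ) * nu d f g) + (-1 : k) ^ (f : ℕ) * nu d e g
        - (-1 : k) ^ (g : ℕ) * nu d e f = 0 :=
  stmt_1_general n lam mu nu F hF hK
end

section
/- Let k be a field and let L_1,...,L_u be linearly independent linear forms in k[y_1,...,y_q], each of which is a binomial (a k-linear combination of exactly two distinct variables with both coefficients nonzero), and suppose together they involve exactly q variables. Then {L_1,...,L_u} can be partitioned into disjoint subsets A, D_1, ..., D_p with p = q - u, such that for each j = 1,...,p the number of variables involved in D_j equals |D_j| + 1, and the number of variables involved in A equals |A|. -/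
/-!
Join two variables by an edge when some form involves both. The forms whose variables lie in a
connected component `C` restrict to linearly independent functions on `C`, so there are at most
`|C|` of them; conversely each binomial contributes at most one edge, and a connected graph on
`|C|` vertices has at least `|C| - 1` edges. So every component has defect
`|C| - #(forms of C) ∈ {0, 1}`, the defects add up to `q - u`, and the blocks `D_j` are the forms
of the components of defect one, `A` the forms of the others.
-/

open Finset Function

theorem LinearIndependent.natCard_le_natCard_of_support_subset {k σ ι : Type*} [Field k]
    [Finite σ] [Finite ι] {L : ι → σ → k} (hL : LinearIndependent k L) {s : Set σ}
    (hs : ∀ i, support (L i) ⊆ s) : Nat.card ι ≤ Nat.card s := by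
  have := Fintype.ofFinite σ
  have := Fintype.ofFinite ι
  have hspan : Submodule.span k (Set.range L) ≤
      LinearMap.ker (LinearMap.funLeft k k (Subtype.val : ↥sᶜ → σ)) :=
    Submodule.span_le.2 <| Set.range_subset_iff.2 fun i =>
      funext fun v => not_ne_iff.mp fun h => v.2 (hs i h)
  have hdisj : Disjoint (LinearMap.ker (LinearMap.funLeft k k (Subtype.val : ↥sᶜ → σ)))
      (LinearMap.ker (LinearMap.funLeft k k (Subtype.val : s → σ))) := by
    refine Submodule.disjoint_def.2 fun f hf_compl hf => funext fun v => ?_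
    by_cases hv : v ∈ s
    · exact congrFun hf ⟨v, hv⟩
    · exact congrFun hf_compl ⟨v, hv⟩
  have := Fintype.ofFinite s
  rw [Nat.card_eq_fintype_card, Nat.card_eq_fintype_card]
  exact ((hL.map (hdisj.mono_left hspan)).fintype_card_le_finrank).trans_eq
      (Module.finrank_fintype_fun_eq_card k)

section InvolvementGraph

variable {σ ι M : Type*} [Zero M] (L : ι → σ → M)

def involvementGraph : SimpleGraph σ where
  Adj v w := v ≠ w ∧ ∃ i, L i v ≠ 0 ∧ L i w ≠ 0
  symm := ⟨fun _ _ ⟨hvw, i, hv, hw⟩ => ⟨hvw.symm, i, hw, hv⟩⟩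
  loopless := ⟨fun _ h => h.1 rfl⟩

variable {L}

theorem involvementGraph_reachable {i : ι} {v w : σ} (hv : L i v ≠ 0) (hw : L i w ≠ 0) :
    (involvementGraph L).Reachable v w := by
  rcases eq_or_ne v w with rfl | hvw
  · rfl
  · exact SimpleGraph.Adj.reachable ⟨hvw, i, hv, hw⟩

theorem support_eq_pair_of_ncard_le_two [Finite σ] {f : σ → M} (hf : (support f).ncard ≤ 2)
    {v w : σ} (hvw : v ≠ w) (hv : f v ≠ 0) (hw : f w ≠ 0) : support f = {v, w} :=
  (Set.eq_of_subset_of_ncard_le (Set.insert_subset hv (Set.singleton_subset_iff.2 hw))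
    (by rwa [Set.ncard_pair hvw])).symm

theorem ncard_support_le_two_of_eq_zero {f : σ → M} {a b : σ}
    (h : ∀ c, c ≠ a → c ≠ b → f c = 0) : (support f).ncard ≤ 2 := by
  refine (Set.ncard_le_ncard (t := {a, b}) (fun v hv => ?_)).trans
    ((Set.ncard_insert_le a {b}).trans (by rw [Set.ncard_singleton]))
  by_contra hn
  simp only [Set.mem_insert_iff, Set.mem_singleton_iff, not_or] at hn
  exact hv (h v hn.1 hn.2)

variable [Finite σ] [Finite ι] (hL : ∀ i, (support (L i)).ncard ≤ 2)
  {c : ι → (involvementGraph L).ConnectedComponent}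
  (hc : ∀ i v, L i v ≠ 0 → (involvementGraph L).connectedComponentMk v = c i)
include hL hc

theorem natCard_edgeSet_toSimpleGraph_le (C : (involvementGraph L).ConnectedComponent) :
    Nat.card C.toSimpleGraph.edgeSet ≤ Nat.card {i // c i = C} := by
  have : ∀ e : C.toSimpleGraph.edgeSet, ∃ i : {i // c i = C}, ∀ z : C, z ∈ e.1 ↔ L i z ≠ 0 := by
    rintro ⟨e, he⟩
    induction e using Sym2.ind with | h x y => ?_
    obtain ⟨hxy, i, hx, hy⟩ : (involvementGraph L).Adj x y := he
    refine ⟨⟨i, (hc i x hx).symm.trans x.2⟩, fun z => ?_⟩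
    show z ∈ s(x, y) ↔ L i z ≠ 0
    rw [← mem_support, support_eq_pair_of_ncard_le_two (hL i) hxy hx hy]
    simp only [Sym2.mem_iff, Set.mem_insert_iff, Set.mem_singleton_iff, Subtype.ext_iff]
  choose f hf using this
  exact Nat.card_le_card_of_injective f fun e e' h =>
    Subtype.ext <| Sym2.ext fun z => by rw [hf, hf, h]

theorem natCard_fiber_le_add_one (C : (involvementGraph L).ConnectedComponent) :
    Nat.card {v // (involvementGraph L).connectedComponentMk v = C} ≤
      Nat.card {i // c i = C} + 1 :=
  C.connected_toSimpleGraph.card_vert_le_card_edgeSet_add_one.trans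
    (Nat.add_le_add_right (natCard_edgeSet_toSimpleGraph_le hL hc C) 1)

end InvolvementGraph

theorem LinearIndependent.natCard_le_natCard_fiber {k σ ι : Type*} [Field k] [Finite σ]
    [Finite ι] {L : ι → σ → k} (hind : LinearIndependent k L)
    {c : ι → (involvementGraph L).ConnectedComponent}
    (hc : ∀ i v, L i v ≠ 0 → (involvementGraph L).connectedComponentMk v = c i)
    (C : (involvementGraph L).ConnectedComponent) :
    Nat.card {i // c i = C} ≤ Nat.card {v // (involvementGraph L).connectedComponentMk v = C} :=
  (hind.comp _ Subtype.val_injective).natCard_le_natCard_of_support_subset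
    (s := {v | (involvementGraph L).connectedComponentMk v = C})
    fun i v hv => (hc i v hv).trans i.2

theorem Nat.card_subtype_comp_eq_sum {α β : Type*} [Finite α] (f : α → β) (p : β → Prop)
    [Fintype {b // p b}] :
    Nat.card {a // p (f a)} = ∑ b : {b // p b}, Nat.card {a // f a = b} := by
  rw [← Nat.card_sigma]
  exact Nat.card_congr (Equiv.sigmaSubtypeFiberEquivSubtype f fun _ => Iff.rfl).symm

theorem Nat.card_eq_sum_card_fiber {α β : Type*} [Finite α] [Fintype β] (f : α → β) :
    Nat.card α = ∑ b, Nat.card {a // f a = b} := by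
  rw [← Nat.card_sigma]
  exact Nat.card_congr (Equiv.sigmaFiberEquiv f).symm

theorem exists_label_of_natCard_fiber_le_add_one {σ ι κ : Type*} [Finite σ] [Finite ι]
    [Fintype κ] (fV : σ → κ) (fE : ι → κ)
    (hle : ∀ x, Nat.card {i // fE i = x} ≤ Nat.card {v // fV v = x})
    (hle_add_one : ∀ x, Nat.card {v // fV v = x} ≤ Nat.card {i // fE i = x} + 1) :
    ∃ c : κ → Fin (Nat.card σ - Nat.card ι + 1),
      (∀ j : Fin (Nat.card σ - Nat.card ι),
        Nat.card {v // c (fV v) = j.succ} = Nat.card {i // c (fE i) = j.succ} + 1) ∧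
      Nat.card {v // c (fV v) = 0} = Nat.card {i // c (fE i) = 0} := by
  classical
  set T := univ.filter fun x => Nat.card {v // fV v = x} = Nat.card {i // fE i = x} + 1
  have hT : #T = Nat.card σ - Nat.card ι := by
    suffices Nat.card σ = Nat.card ι + #T by omega
    rw [Nat.card_eq_sum_card_fiber fV, Nat.card_eq_sum_card_fiber fE, card_filter,
      ← sum_add_distrib]
    refine sum_congr rfl fun x _ => ?_
    have := hle x
    have := hle_add_one x
    split_ifs <;> omega
  let e := T.equivFinOfCardEq hT
  let c : κ → Fin (Nat.card σ - Nat.card ι + 1) := fun x =>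
    if hx : x ∈ T then (e ⟨x, hx⟩).succ else 0
  have hc_succ : ∀ x j, c x = j.succ ↔ x = e.symm j := by
    intro x j
    by_cases hx : x ∈ T
    · simp only [c, dif_pos hx, Fin.succ_inj, ← Equiv.eq_symm_apply, Subtype.ext_iff]
    · simp only [c, dif_neg hx]
      exact iff_of_false (Fin.succ_ne_zero j).symm fun hxj => hx (hxj ▸ (e.symm j).2)
  have hc_zero : ∀ x, c x = 0 ↔ x ∉ T := by
    intro x
    by_cases hx : x ∈ T <;> simp [c, hx, Fin.succ_ne_zero]
  refine ⟨c, fun j => ?_, ?_⟩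
  · simp only [hc_succ]
    exact (mem_filter.1 (e.symm j).2).2
  · rw [Nat.card_subtype_comp_eq_sum fV (c · = 0), Nat.card_subtype_comp_eq_sum fE (c · = 0)]
    refine sum_congr rfl fun x _ => ?_
    have hx : x.1 ∉ T := (hc_zero x).1 x.2
    have := hle x
    have := hle_add_one x
    simp only [T, mem_filter, mem_univ, true_and] at hx
    omega

/-- Lemma 3.8 (blocksofbinomials): linearly independent binomial linear forms
`L_1,...,L_u` in `k[y_1,...,y_q]` involving all `q` variables can be partitioned into
`A, D_1, ..., D_p` with `p = q - u`, each `D_j` involving `|D_j| + 1` variables and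
`A` involving `|A|` variables. -/
theorem stmt_2 {k : Type*} [Field k] (q u : ℕ) (L : Fin u → Fin q → k)
    (hind : LinearIndependent k L)
    (hbin : ∀ i : Fin u, ∃ a b : Fin q, a ≠ b ∧ L i a ≠ 0 ∧ L i b ≠ 0 ∧
      ∀ c : Fin q, c ≠ a → c ≠ b → L i c = 0)
    (hall : ∀ v : Fin q, ∃ i : Fin u, L i v ≠ 0) :
    ∃ c : Fin u → Fin (q - u + 1),
      (∀ j : Fin (q - u),
        Nat.card {v : Fin q // ∃ i : Fin u, c i = j.succ ∧ L i v ≠ 0}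
          = Nat.card {i : Fin u // c i = j.succ} + 1) ∧
      Nat.card {v : Fin q // ∃ i : Fin u, c i = 0 ∧ L i v ≠ 0}
          = Nat.card {i : Fin u // c i = 0} := by
  classical
  choose a b _ hLa _ hsupp using hbin
  let G := involvementGraph L
  let comp : Fin u → G.ConnectedComponent := fun i => G.connectedComponentMk (a i)
  have hcomp : ∀ i v, L i v ≠ 0 → G.connectedComponentMk v = comp i := fun i v hv =>
    SimpleGraph.ConnectedComponent.sound (involvementGraph_reachable hv (hLa i))
  have hL : ∀ i, (support (L i)).ncard ≤ 2 := fun i => ncard_support_le_two_of_eq_zero (hsupp i)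
  have hlabel := exists_label_of_natCard_fiber_le_add_one G.connectedComponentMk comp
    (hind.natCard_le_natCard_fiber hcomp) (natCard_fiber_le_add_one hL hcomp)
  rw [Nat.card_fin, Nat.card_fin] at hlabel
  obtain ⟨lab, hsucc, hzero⟩ := hlabel
  have hinv : ∀ t v, (∃ i, lab (comp i) = t ∧ L i v ≠ 0) ↔ lab (G.connectedComponentMk v) = t :=
    fun t v => ⟨fun ⟨i, hi, hv⟩ => hcomp i v hv ▸ hi,
      fun h => let ⟨i, hi⟩ := hall v; ⟨i, hcomp i v hi ▸ h, hi⟩⟩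
  refine ⟨lab ∘ comp, fun j => ?_, ?_⟩ <;> simp only [Function.comp_apply, hinv]
  exacts [hsucc j, hzero]
end

section
/- Let k be a field, 0 ≤ a < b ≤ N and c < d two further indices with b < c < d ≤ M. Suppose square-free quadrics F_{abc}, F_{abd}, F_{acd}, F_{bcd} ∈ k[x_0,...,x_M] satisfy the Koszul relation (-1)^a x_a F_{bcd} + (-1)^{b-1} x_b F_{acd} + (-1)^{c-2} x_c F_{abd} + (-1)^{d-3} x_d F_{abc} = 0, and suppose F_{abc} = x_c L^c_{ab} and F_{abd} = x_d L^d_{ab}, where L^c_{ab}, L^d_{ab} are linear forms in x_a, x_b, and F_{acd} = λ_a x_a x_c + μ_a x_a x_d + ν_a x_c x_d, F_{bcd} = λ_b x_b x_c + μ_b x_b x_d + ν_b x_c x_d. Then (-1)^a x_a ν_b + (-1)^{b-1} x_b ν_a + (-1)^{c-2} L^d_{ab} + (-1)^{d-3} L^c_{ab} = 0 as linear forms. -/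
/-!
After substituting the given forms, the Koszul relation reads
`x_c x_d E + x_c P + x_d Q = 0`, where `E` is the claimed linear form and `P`, `Q` are multiples
of `x_a x_b`. None of `E`, `P`, `Q` involves `x_c` or `x_d`, so `E` is the coefficient of
`x_c x_d` and must vanish.
-/

open MvPolynomial

namespace MvPolynomial

variable {R σ : Type*} [CommRing R] {s : Set σ}

theorem aeval_eq_self_of_mem_supported {g : σ → MvPolynomial σ R} (hg : ∀ i ∈ s, g i = X i)
    {p : MvPolynomial σ R} (hp : p ∈ supported R s) : aeval g p = p := by
  rw [supported_eq_adjoin_X] at hp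
  refine (AlgHom.eqOn_adjoin_iff (φ := aeval g) (ψ := AlgHom.id R _)).2 ?_ hp
  rintro _ ⟨i, hi, rfl⟩
  simp [hg i hi]

/-- Substituting `(1, 1)`, `(1, 0)` and `(0, 1)` for `(X i, X j)` isolates `e`. -/
theorem eq_zero_of_X_mul_X_mul_add_eq_zero {i j : σ} (hij : i ≠ j) (hi : i ∉ s) (hj : j ∉ s)
    {e p q : MvPolynomial σ R} (he : e ∈ supported R s) (hp : p ∈ supported R s)
    (hq : q ∈ supported R s) (h : X i * X j * e + X i * p + X j * q = 0) : e = 0 := by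
  classical
  have subst_eq : ∀ u v : MvPolynomial σ R, u * v * e + u * p + v * q = 0 := by
    intro u v
    have hg : ∀ k ∈ s, Function.update (Function.update X i u) j v k = X k := by
      intro k hk
      rw [Function.update_of_ne (ne_of_mem_of_not_mem hk hj),
        Function.update_of_ne (ne_of_mem_of_not_mem hk hi)]
    have := congrArg (aeval (Function.update (Function.update X i u) j v)) h
    simpa only [map_add, map_mul, map_zero, aeval_X, Function.update_self,
      Function.update_of_ne hij, aeval_eq_self_of_mem_supported hg he,
      aeval_eq_self_of_mem_supported hg hp, aeval_eq_self_of_mem_supported hg hq] using this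
  linear_combination subst_eq 1 1 - subst_eq 1 0 - subst_eq 0 1

end MvPolynomial

/-- Lemma 4.2(3): comparing the coefficient of `x_c x_d` in the Koszul relation among the
four quadrics, after the splittings `F_{abc} = x_c L^c_{ab}` and `F_{abd} = x_d L^d_{ab}`,
yields `(-1)^a x_a ν_b + (-1)^{b-1} x_b ν_a + (-1)^{c-2} L^d_{ab} + (-1)^{d-3} L^c_{ab} = 0`. -/
theorem stmt_8 {k : Type*} [Field k] (M : ℕ) (a b c d : Fin (M + 1))
    (hab : a < b) (hbc : b < c) (hcd : c < d)
    (α₁ β₁ α₂ β₂ lama mua nua lamb mub nub : k)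
    (Lc Ld : MvPolynomial (Fin (M + 1)) k)
    (hLc : Lc = C α₁ * X a + C β₁ * X b) (hLd : Ld = C α₂ * X a + C β₂ * X b)
    (Fabc Fabd Facd Fbcd : MvPolynomial (Fin (M + 1)) k)
    (hFabc : Fabc = X c * Lc) (hFabd : Fabd = X d * Ld)
    (hFacd : Facd = C lama * X a * X c + C mua * X a * X d + C nua * X c * X d)
    (hFbcd : Fbcd = C lamb * X b * X c + C mub * X b * X d + C nub * X c * X d)
    (hK : C ((-1 : k) ^ (a : ℕ)) * X a * Fbcd - C ((-1 : k) ^ (b : ℕ)) * X b * Facd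
      + C ((-1 : k) ^ (c : ℕ)) * X c * Fabd - C ((-1 : k) ^ (d : ℕ)) * X d * Fabc = 0) :
    C ((-1 : k) ^ (a : ℕ) * nub) * X a - C ((-1 : k) ^ (b : ℕ) * nua) * X b
      + C ((-1 : k) ^ (c : ℕ)) * Ld - C ((-1 : k) ^ (d : ℕ)) * Lc = 0 := by
  subst hLc hLd hFabc hFabd hFacd hFbcd
  have hXa : X a ∈ supported k {a, b} := X_mem_supported.2 (by simp)
  have hXb : X b ∈ supported k {a, b} := X_mem_supported.2 (by simp)
  refine eq_zero_of_X_mul_X_mul_add_eq_zero (s := {a, b})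
    (p := C ((-1) ^ (a : ℕ) * lamb - (-1) ^ (b : ℕ) * lama) * X a * X b)
    (q := C ((-1) ^ (a : ℕ) * mub - (-1) ^ (b : ℕ) * mua) * X a * X b)
    hcd.ne ?_ ?_ ?_ ?_ ?_ ?_
  · simp [hbc.ne', (hab.trans hbc).ne']
  · simp [(hbc.trans hcd).ne', (hab.trans (hbc.trans hcd)).ne']
  iterate 3 apply_rules [Subalgebra.add_mem, Subalgebra.sub_mem, Subalgebra.mul_mem,
    Subalgebra.algebraMap_mem]
  · simp only [map_mul, map_sub]
    linear_combination hK
end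

section
/- Let X be a finite set of points in P^n over an algebraically closed field k with ideal I, and let d, e, f, g be distinct indices with d < e < f < g. Let T be a linear form in x_d and x_e. Assume x_g T ∈ I, x_f T ∉ I, and that the quadric F_{deg} = λ x_d x_e + μ x_d x_g + ν x_e x_g ∈ I has λ = 0 (i.e., F_{deg} ∈ (x_g)), and that square-free quadrics F_{dfg}, F_{efg} ∈ I exist whose coefficients satisfy the Koszul coefficient relation (-1)^d λ_{efg} + (-1)^{e-1} λ_{dfg} + (-1)^{f-2} λ_{deg} = 0 (coefficients on the 'first' monomial). Then λ_{dfg} = 0 and λ_{efg} = 0; i.e., F_{dfg} ∈ (x_g) and F_{efg} ∈ (x_g). -/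
/-!
Pick `E ∈ X` with `x_f T (E) ≠ 0`. Since `x_g T` vanishes on `X`, `x_g(E) = 0`, so evaluating
`F_{dfg}` and `F_{efg}` at `E` leaves `λ_{dfg} x_d(E) x_f(E) = 0` and `λ_{efg} x_e(E) x_f(E) = 0`.
As `T(E) ≠ 0`, one of `x_d(E)`, `x_e(E)` is nonzero, which kills one `λ`; the Koszul relation
(with `λ_{deg} = 0`) says the two `λ`'s agree up to sign, which kills the other.
-/

open MvPolynomial

theorem eval_quadric_of_eval_eq_zero {R σ : Type*} [CommSemiring R] {P : σ → R} {i j g : σ}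
    (a b c : R) (hg : P g = 0) :
    eval P (C a * X i * X j + C b * X i * X g + C c * X j * X g) = a * P i * P j := by
  simp [hg]

theorem mul_eq_zero_of_eval_quadric_eq_zero {R σ : Type*} [CommRing R] [NoZeroDivisors R]
    {P : σ → R} {i j g : σ} {a b c : R}
    (h : eval P (C a * X i * X j + C b * X i * X g + C c * X j * X g) = 0)
    (hg : P g = 0) (hj : P j ≠ 0) : a * P i = 0 := by
  rw [eval_quadric_of_eval_eq_zero a b c hg] at h
  exact (mul_eq_zero.mp h).resolve_right hj

theorem eq_zero_and_eq_zero_of_mul_eq_mul {M₀ : Type*} [MulZeroClass M₀] [NoZeroDivisors M₀]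
    {a b x y u v : M₀} (hu : u ≠ 0) (hv : v ≠ 0) (huv : u * a = v * b)
    (ha : a * x = 0) (hb : b * y = 0) (hxy : x ≠ 0 ∨ y ≠ 0) : a = 0 ∧ b = 0 := by
  rcases hxy with hx | hy
  · have ha₀ : a = 0 := (mul_eq_zero.mp ha).resolve_right hx
    rw [ha₀, mul_zero, eq_comm, mul_eq_zero] at huv
    exact ⟨ha₀, huv.resolve_left hv⟩
  · have hb₀ : b = 0 := (mul_eq_zero.mp hb).resolve_right hy
    rw [hb₀, mul_zero, mul_eq_zero] at huv
    exact ⟨huv.resolve_left hu, hb₀⟩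

theorem stmt_10_general {k : Type*} [Field k] (n : ℕ)
    (Xs : Finset (Fin (n + 1) → k))
    (d e f g : Fin (n + 1))
    (td te : k) (T : MvPolynomial (Fin (n + 1)) k)
    (hT : T = C td * X d + C te * X e)
    (hgT : ∀ P ∈ Xs, eval P (X g * T) = 0)
    (hfT : ¬ ∀ P ∈ Xs, eval P (X f * T) = 0)
    (lam_deg lam_dfg mu_dfg nu_dfg lam_efg mu_efg nu_efg : k)
    (hlam_deg : lam_deg = 0)
    (hFdfg : ∀ P ∈ Xs,
      eval P (C lam_dfg * X d * X f + C mu_dfg * X d * X g + C nu_dfg * X f * X g) = 0)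
    (hFefg : ∀ P ∈ Xs,
      eval P (C lam_efg * X e * X f + C mu_efg * X e * X g + C nu_efg * X f * X g) = 0)
    (hrel : (-1 : k) ^ (d : ℕ) * lam_efg - (-1 : k) ^ (e : ℕ) * lam_dfg
      + (-1 : k) ^ (f : ℕ) * lam_deg = 0) :
    lam_dfg = 0 ∧ lam_efg = 0 := by
  push Not at hfT
  obtain ⟨P, hP, hfTP⟩ := hfT
  rw [eval_mul, eval_X, mul_ne_zero_iff] at hfTP
  obtain ⟨hf, hTP⟩ := hfTP
  have hg : P g = 0 := by
    simpa [hTP] using hgT P hP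
  have hPde : P d ≠ 0 ∨ P e ≠ 0 := by
    by_contra! h
    simp [hT, h] at hTP
  have hsign : (-1 : k) ^ (e : ℕ) * lam_dfg = (-1 : k) ^ (d : ℕ) * lam_efg := by
    linear_combination -hrel + (-1 : k) ^ (f : ℕ) * hlam_deg
  exact eq_zero_and_eq_zero_of_mul_eq_mul (by simp) (by simp) hsign
    (mul_eq_zero_of_eval_quadric_eq_zero (hFdfg P hP) hg hf)
    (mul_eq_zero_of_eval_quadric_eq_zero (hFefg P hP) hg hf) hPde

/-- Lemma 5.2 (xgGxfG): if `x_g T ∈ I`, `x_f T ∉ I`, `F_{deg} ∈ (x_g)` (i.e. `λ_{deg} = 0`),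
and the Koszul coefficient relation among the `λ`'s holds, then `F_{dfg}, F_{efg} ∈ (x_g)`,
i.e. `λ_{dfg} = 0` and `λ_{efg} = 0`. -/
theorem stmt_10 {k : Type*} [Field k] [IsAlgClosed k] (n : ℕ)
    (Xs : Finset (Fin (n + 1) → k))
    (d e f g : Fin (n + 1)) (hde : d < e) (hef : e < f) (hfg : f < g)
    (td te : k) (T : MvPolynomial (Fin (n + 1)) k)
    (hT : T = C td * X d + C te * X e)
    (hgT : ∀ P ∈ Xs, eval P (X g * T) = 0)
    (hfT : ¬ ∀ P ∈ Xs, eval P (X f * T) = 0)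
    (lam_deg mu_deg nu_deg lam_dfg mu_dfg nu_dfg lam_efg mu_efg nu_efg : k)
    (hFdeg : ∀ P ∈ Xs,
      eval P (C lam_deg * X d * X e + C mu_deg * X d * X g + C nu_deg * X e * X g) = 0)
    (hlam_deg : lam_deg = 0)
    (hFdfg : ∀ P ∈ Xs,
      eval P (C lam_dfg * X d * X f + C mu_dfg * X d * X g + C nu_dfg * X f * X g) = 0)
    (hFefg : ∀ P ∈ Xs,
      eval P (C lam_efg * X e * X f + C mu_efg * X e * X g + C nu_efg * X f * X g) = 0)
    (hrel : (-1 : k) ^ (d : ℕ) * lam_efg - (-1 : k) ^ (e : ℕ) * lam_dfg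
      + (-1 : k) ^ (f : ℕ) * lam_deg = 0) :
    lam_dfg = 0 ∧ lam_efg = 0 :=
  stmt_10_general n Xs d e f g td te T hT hgT hfT lam_deg lam_dfg mu_dfg nu_dfg lam_efg mu_efg
    nu_efg hlam_deg hFdfg hFefg hrel
end

section
/- Let X be a finite set of distinct points spanning P^n over an algebraically closed field k, with n ≥ 2. Suppose X lies on the union P^k ∪ P^r of two linear subspaces with k, r ≥ 1 and k + r = n, neither containing X. Then the homogeneous ideal I(X) contains at least k·r linearly independent quadrics of rank ≤ 2 (products of two linear forms). -/
/-!
Since `X` spans and lies on `W₁ ∪ W₂`, we have `W₁ ⊔ W₂ = ⊤`, so the annihilators of `W₁` and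
`W₂` (of dimensions `b` and `a`) meet only in `0`. Bases `g_i` of `W₂^⊥` and `h_j` of `W₁^⊥`
therefore form one linearly independent family of linear forms, and each product `g_i h_j`
vanishes on `W₁ ∪ W₂ ⊇ X`. Completing the `g`'s and `h`'s to a biorthogonal system yields points
`p_{ij}` with `g_k(p_{ij}) h_l(p_{ij}) = δ_{ki} δ_{lj}`, which separates the products.
-/

open MvPolynomial Module Submodule

section

variable {K V : Type*} [Field K] [AddCommGroup V] [Module K V]

theorem LinearIndependent.of_apply_eq_ite {M ι : Type*} [AddCommGroup M] [Module K M]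
    [DecidableEq ι] {Q : ι → M} (φ : ι → M →ₗ[K] K)
    (h : ∀ s t, φ s (Q t) = if s = t then 1 else 0) : LinearIndependent K Q := by
  have hsingle : LinearMap.pi φ ∘ Q = fun t => Pi.single t 1 := by
    ext t s
    simp [h, Pi.single_apply]
  exact .of_comp (LinearMap.pi φ) (hsingle ▸ Pi.linearIndependent_single_one ι K)

theorem LinearIndependent.exists_apply_eq_ite {ι : Type*} [Finite ι] [DecidableEq ι]
    {F : ι → Dual K V} (hF : LinearIndependent K F) :
    ∃ v : ι → V, ∀ k l, F k (v l) = if k = l then 1 else 0 := by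
  have hcoe : LinearIndependent K fun i => ⇑(F i) :=
    hF.map' (LinearMap.ltoFun K V K K) (LinearMap.ker_eq_bot.mpr DFunLike.coe_injective)
  have hsurj : Function.Surjective (LinearMap.pi F) := by
    rw [← LinearMap.range_eq_top, ← span_flip_eq_top_iff_linearIndependent.mpr hcoe,
      ← span_eq (LinearMap.range (LinearMap.pi F)), LinearMap.coe_range]
    rfl
  choose v hv using fun l => hsurj (Pi.single l 1)
  refine ⟨v, fun k l => ?_⟩
  simpa [Pi.single_apply] using congrFun (hv l) k

theorem LinearIndependent.mul_apply_of_sumElim {ι κ : Type*} [Finite ι] [Finite κ]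
    {G : ι → Dual K V} {H : κ → Dual K V} (hGH : LinearIndependent K (Sum.elim G H)) :
    LinearIndependent K fun p : ι × κ => fun x => G p.1 x * H p.2 x := by
  classical
  obtain ⟨v, hv⟩ := hGH.exists_apply_eq_ite
  have hG (k : ι) l : G k (v l) = if .inl k = l then 1 else 0 := hv (.inl k) l
  have hH (k : κ) l : H k (v l) = if .inr k = l then 1 else 0 := hv (.inr k) l
  refine .of_apply_eq_ite (fun p => LinearMap.proj (v (.inl p.1) + v (.inr p.2))) fun s t => ?_
  simp only [LinearMap.coe_proj, Function.eval, map_add, hG, hH]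
  grind

theorem Submodule.exists_linearIndependent_sumElim_of_disjoint {E : Type*} [AddCommGroup E]
    [Module K E] [FiniteDimensional K E] {U₁ U₂ : Submodule K E} (h : Disjoint U₁ U₂) {a b : ℕ}
    (ha : finrank K U₁ = a) (hb : finrank K U₂ = b) :
    ∃ (G : Fin a → E) (H : Fin b → E), (∀ i, G i ∈ U₁) ∧ (∀ j, H j ∈ U₂) ∧
      LinearIndependent K (Sum.elim G H) := by
  have B₁ := finBasisOfFinrankEq K _ ha
  have B₂ := finBasisOfFinrankEq K _ hb
  refine ⟨fun i => B₁ i, fun j => B₂ j, fun i => (B₁ i).2, fun j => (B₂ j).2, ?_⟩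
  refine (B₁.linearIndependent.map' _ (ker_subtype _)).sum_type
    (B₂.linearIndependent.map' _ (ker_subtype _)) (h.mono ?_ ?_)
  · exact span_le.mpr (Set.range_subset_iff.mpr fun i => (B₁ i).2)
  · exact span_le.mpr (Set.range_subset_iff.mpr fun j => (B₂ j).2)

namespace Module.Dual

variable {σ : Type*} [Fintype σ]

noncomputable def toMvPolynomial (φ : Dual K (σ → K)) : MvPolynomial σ K :=
  ∑ i, C (φ (Pi.basisFun K σ i)) * X i

theorem isHomogeneous_toMvPolynomial (φ : Dual K (σ → K)) : φ.toMvPolynomial.IsHomogeneous 1 :=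
  IsHomogeneous.sum _ _ _ fun i _ => by
    simpa using (isHomogeneous_C σ (φ (Pi.basisFun K σ i))).mul (isHomogeneous_X K i)

theorem eval_toMvPolynomial (φ : Dual K (σ → K)) (x : σ → K) :
    MvPolynomial.eval x φ.toMvPolynomial = φ x := by
  conv_rhs => rw [← (Pi.basisFun K σ).sum_repr x]
  simp [toMvPolynomial, mul_comm]

theorem linearIndependent_toMvPolynomial_mul {ι κ : Type*} [Finite ι] [Finite κ]
    {G : ι → Dual K (σ → K)} {H : κ → Dual K (σ → K)} (hGH : LinearIndependent K (Sum.elim G H)) :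
    LinearIndependent K fun p : ι × κ => (G p.1).toMvPolynomial * (H p.2).toMvPolynomial := by
  let evalₗ := LinearMap.pi fun x => (aeval x : MvPolynomial σ K →ₐ[K] K).toLinearMap
  have heval : evalₗ ∘ (fun p : ι × κ => (G p.1).toMvPolynomial * (H p.2).toMvPolynomial) =
      fun p x => G p.1 x * H p.2 x := by
    ext p x
    simp [evalₗ, eval_toMvPolynomial]
  exact .of_comp evalₗ (heval ▸ hGH.mul_apply_of_sumElim)

end Module.Dual

end

theorem stmt_18_general {K : Type*} [Field K] (n a b : ℕ)
    (hab : a + b = n)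
    (Xs : Finset (Fin (n + 1) → K))
    (hspan : Submodule.span K (Xs : Set (Fin (n + 1) → K)) = ⊤)
    (W₁ W₂ : Submodule K (Fin (n + 1) → K))
    (hW₁ : Module.finrank K W₁ = a + 1) (hW₂ : Module.finrank K W₂ = b + 1)
    (hsub : ∀ P ∈ Xs, P ∈ W₁ ∨ P ∈ W₂) :
    ∃ Q : Fin (a * b) → MvPolynomial (Fin (n + 1)) K,
      LinearIndependent K Q ∧
      (∀ t : Fin (a * b), ∃ g h : MvPolynomial (Fin (n + 1)) K,
        g.IsHomogeneous 1 ∧ h.IsHomogeneous 1 ∧ Q t = g * h) ∧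
      ∀ t : Fin (a * b), ∀ P ∈ Xs, eval P (Q t) = 0 := by
  have hsup : W₁ ⊔ W₂ = ⊤ := by
    rw [eq_top_iff, ← hspan]
    exact span_le.mpr fun P hP => (hsub P hP).elim (mem_sup_left ·) (mem_sup_right ·)
  have hcodim (W : Submodule K (Fin (n + 1) → K)) :
      finrank K W + finrank K W.dualAnnihilator = n + 1 := by
    simpa using Subspace.finrank_add_finrank_dualAnnihilator_eq W
  have hdisj : Disjoint W₂.dualAnnihilator W₁.dualAnnihilator := by
    rw [disjoint_iff, ← dualAnnihilator_sup_eq, sup_comm, hsup, dualAnnihilator_top]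
  obtain ⟨G, H, hG, hH, hGH⟩ := exists_linearIndependent_sumElim_of_disjoint hdisj (a := a) (b := b)
    (by have := hcodim W₂; omega) (by have := hcodim W₁; omega)
  let e : Fin (a * b) ≃ Fin a × Fin b := finProdFinEquiv.symm
  refine ⟨fun t => (G (e t).1).toMvPolynomial * (H (e t).2).toMvPolynomial,
    (Dual.linearIndependent_toMvPolynomial_mul hGH).comp e e.injective,
    fun t => ⟨_, _, Dual.isHomogeneous_toMvPolynomial _, Dual.isHomogeneous_toMvPolynomial _, rfl⟩,
    fun t P hP => ?_⟩
  rw [eval_mul, Dual.eval_toMvPolynomial, Dual.eval_toMvPolynomial]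
  rcases hsub P hP with hP₁ | hP₂
  · rw [(mem_dualAnnihilator _).mp (hH _) P hP₁, mul_zero]
  · rw [(mem_dualAnnihilator _).mp (hG _) P hP₂, zero_mul]

/-- If `X` spans `P^n` and lies on `P^a ∪ P^b` with `a, b ≥ 1`, `a + b = n`, and neither
subspace contains `X`, then `I(X)` contains `a·b` linearly independent quadrics of rank
at most 2 (products of two linear forms). -/
theorem stmt_18 {K : Type*} [Field K] [IsAlgClosed K] (n a b : ℕ) (hn : 2 ≤ n)
    (ha : 1 ≤ a) (hb : 1 ≤ b) (hab : a + b = n)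
    (Xs : Finset (Fin (n + 1) → K)) (h0 : (0 : Fin (n + 1) → K) ∉ Xs)
    (hspan : Submodule.span K (Xs : Set (Fin (n + 1) → K)) = ⊤)
    (W₁ W₂ : Submodule K (Fin (n + 1) → K))
    (hW₁ : Module.finrank K W₁ = a + 1) (hW₂ : Module.finrank K W₂ = b + 1)
    (hsub : ∀ P ∈ Xs, P ∈ W₁ ∨ P ∈ W₂)
    (hnc1 : ¬ ∀ P ∈ Xs, P ∈ W₁) (hnc2 : ¬ ∀ P ∈ Xs, P ∈ W₂) :
    ∃ Q : Fin (a * b) → MvPolynomial (Fin (n + 1)) K,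
      LinearIndependent K Q ∧
      (∀ t : Fin (a * b), ∃ g h : MvPolynomial (Fin (n + 1)) K,
        g.IsHomogeneous 1 ∧ h.IsHomogeneous 1 ∧ Q t = g * h) ∧
      ∀ t : Fin (a * b), ∀ P ∈ Xs, eval P (Q t) = 0 :=
  stmt_18_general n a b hab Xs hspan W₁ W₂ hW₁ hW₂ hsub
end
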